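/- arXiv:2009.00557 — 2 statements merged into one kernel-verified Lean document; each statement's English description precedes it below -/
import Mathlib

section
/- Let c : [−X_c, X_c] → ℝ be integrable with Fourier transform ĉ(κ) = ∫_{−X_c}^{X_c} e^{i2πκx} c(x) dx, and suppose c equals the sum of its Fourier series c(x) = (1/(2X_c)) ∑_{n∈ℤ} ĉ(κ_n) e^{−i2πκ_n x} with κ_n = n/(2X_c), with the series converging in L¹. Then for every real κ, ĉ(κ) = ∑_{n∈ℤ} ĉ(κ_n) · sinc(2π(κ_n − κ)X_c). -/
/-!
The transform `f ↦ ∫_{-X}^{X} e^{i2πκx} f(x) dx` has an integrand of modulus `|f|`, so it is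
`1`-Lipschitz for the `L¹` distance and carries the `L¹`-convergent Fourier partial sums of `c`
to a sequence converging to `ĉ(κ)`. It sends `e^{-i2πκₙx}` to `2X sinc(2π(κₙ - κ)X)`, so the
image of the `N`-th normalized partial sum is exactly the `N`-th partial sum of the sampling series.
-/

open Real MeasureTheory Filter Topology

noncomputable def sinc (t : ℝ) : ℝ := if t = 0 then 1 else Real.sin t / t

noncomputable def ftBounded (Xc : ℝ) (c : ℝ → ℝ) (κ : ℝ) : ℂ :=
  ∫ x in (-Xc)..Xc, Complex.exp (Complex.I * 2 * π * κ * x) * (c x : ℂ)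

theorem sinc_eq_real_sinc : _root_.sinc = Real.sinc := rfl

open Complex in
theorem integral_exp_I_mul_eq_two_mul_sinc (a X : ℝ) :
    ∫ x in (-X)..X, cexp (I * a * x) = 2 * X * Real.sinc (a * X) := by
  rcases eq_or_ne a 0 with rfl | ha
  · simp [two_mul]
  rcases eq_or_ne X 0 with rfl | hX
  · simp
  have hIa : I * a ≠ 0 := mul_ne_zero I_ne_zero (ofReal_ne_zero.mpr ha)
  have hsin : cexp (a * X * I) - cexp (-(a * X) * I) = 2 * Complex.sin (a * X) * I := by
    rw [exp_mul_I, exp_mul_I, Complex.cos_neg, Complex.sin_neg]; ring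
  rw [integral_exp_mul_complex hIa, Real.sinc_of_ne_zero (mul_ne_zero ha hX)]
  push_cast
  rw [show I * a * X = a * X * I by ring, show I * a * -X = -(a * X) * I by ring, hsin]
  have : (a : ℂ) ≠ 0 := ofReal_ne_zero.mpr ha
  have : (X : ℂ) ≠ 0 := ofReal_ne_zero.mpr hX
  field_simp

noncomputable def fourierOn (X : ℝ) (f : ℝ → ℂ) (κ : ℝ) : ℂ :=
  ∫ x in (-X)..X, Complex.exp (Complex.I * 2 * π * κ * x) * f x

theorem ftBounded_eq_fourierOn (X : ℝ) (c : ℝ → ℝ) (κ : ℝ) :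
    ftBounded X c κ = fourierOn X (fun x => c x) κ := rfl

open Complex in
theorem fourierOn_exp (X ν κ : ℝ) :
    fourierOn X (fun x => cexp (-I * 2 * π * ν * x)) κ =
      2 * X * Real.sinc (2 * π * (ν - κ) * X) := by
  have hexp : ∀ x : ℝ, cexp (I * 2 * π * κ * x) * cexp (-I * 2 * π * ν * x)
      = cexp (I * ↑(2 * π * (κ - ν)) * x) := fun x => by
    rw [← Complex.exp_add]; push_cast; ring_nf
  simp only [fourierOn, hexp, integral_exp_I_mul_eq_two_mul_sinc]
  rw [show 2 * π * (κ - ν) * X = -(2 * π * (ν - κ) * X) by ring, Real.sinc_neg]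

open Complex in
theorem fourierOn_trigSum {ι : Type*} (s : Finset ι) {X : ℝ} (hX : X ≠ 0) (b : ι → ℂ)
    (ν : ι → ℝ) (κ : ℝ) :
    fourierOn X (fun x => 1 / (2 * X) * ∑ n ∈ s, b n * cexp (-I * 2 * π * ν n * x)) κ
      = ∑ n ∈ s, b n * Real.sinc (2 * π * (ν n - κ) * X) := by
  have hterm : ∀ n (x : ℝ),
      cexp (I * 2 * π * κ * x) * (1 / (2 * X) * (b n * cexp (-I * 2 * π * ν n * x))) =
        1 / (2 * X) * b n * (cexp (I * 2 * π * κ * x) * cexp (-I * 2 * π * ν n * x)) :=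
    fun _ _ => by ring
  have hint : ∀ n ∈ s, IntervalIntegrable
      (fun x : ℝ => 1 / (2 * X) * b n * (cexp (I * 2 * π * κ * x) * cexp (-I * 2 * π * ν n * x)))
      volume (-X) X := fun n _ => by apply Continuous.intervalIntegrable; fun_prop
  simp only [fourierOn, Finset.mul_sum, hterm]
  rw [intervalIntegral.integral_finsetSum hint]
  refine Finset.sum_congr rfl fun n _ => ?_
  rw [intervalIntegral.integral_const_mul]
  have hexp := fourierOn_exp X (ν n) κ
  rw [fourierOn] at hexp
  rw [hexp]
  have : (X : ℂ) ≠ 0 := ofReal_ne_zero.mpr hX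
  field_simp

theorem norm_fourierOn_le {X : ℝ} (hX : -X ≤ X) (f : ℝ → ℂ) (κ : ℝ) :
    ‖fourierOn X f κ‖ ≤ ∫ x in (-X)..X, ‖f x‖ := by
  refine (intervalIntegral.norm_integral_le_integral_norm hX).trans_eq ?_
  refine intervalIntegral.integral_congr fun x _ => ?_
  have : Complex.I * 2 * π * κ * x = ↑(2 * π * κ * x) * Complex.I := by push_cast; ring
  simp only [norm_mul, this, Complex.norm_exp_ofReal_mul_I, one_mul]

theorem fourierOn_sub {X : ℝ} {f g : ℝ → ℂ} (hf : IntervalIntegrable f volume (-X) X)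
    (hg : IntervalIntegrable g volume (-X) X) (κ : ℝ) :
    fourierOn X (f - g) κ = fourierOn X f κ - fourierOn X g κ := by
  have hexp : ContinuousOn (fun x : ℝ => Complex.exp (Complex.I * 2 * π * κ * x))
      (Set.uIcc (-X) X) := Continuous.continuousOn (by fun_prop)
  simp only [fourierOn, Pi.sub_apply, mul_sub]
  exact intervalIntegral.integral_sub (hf.continuousOn_mul hexp) (hg.continuousOn_mul hexp)

theorem tendsto_fourierOn_of_tendsto_integral_norm_sub {α : Type*} {l : Filter α} {X : ℝ}
    (hX : -X ≤ X) {f : ℝ → ℂ} {F : α → ℝ → ℂ} (hf : IntervalIntegrable f volume (-X) X)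
    (hF : ∀ i, IntervalIntegrable (F i) volume (-X) X)
    (hlim : Tendsto (fun i => ∫ x in (-X)..X, ‖f x - F i x‖) l (𝓝 0)) (κ : ℝ) :
    Tendsto (fun i => fourierOn X (F i) κ) l (𝓝 (fourierOn X f κ)) := by
  rw [tendsto_iff_norm_sub_tendsto_zero]
  refine squeeze_zero (fun _ => norm_nonneg _) (fun i => ?_) hlim
  rw [← fourierOn_sub (hF i) hf]
  refine (norm_fourierOn_le hX _ κ).trans_eq ?_
  simp only [Pi.sub_apply, norm_sub_rev]

theorem shannon_sampling (Xc : ℝ) (hXc : 0 < Xc) (c : ℝ → ℝ)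
    (hInt : IntegrableOn c (Set.Icc (-Xc) Xc))
    (hL1 : Tendsto (fun N : ℕ =>
      ∫ x in (-Xc)..Xc, ‖(c x : ℂ) -
        (1 / (2 * Xc)) * ∑ n ∈ Finset.Icc (-(N : ℤ)) (N : ℤ),
          ftBounded Xc c ((n : ℝ) / (2 * Xc)) *
            Complex.exp (-Complex.I * 2 * π * ((n : ℝ) / (2 * Xc)) * x)‖)
      atTop (nhds 0)) :
    ∀ κ : ℝ, Tendsto (fun N : ℕ =>
      ∑ n ∈ Finset.Icc (-(N : ℤ)) (N : ℤ),
        ftBounded Xc c ((n : ℝ) / (2 * Xc)) *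
          (_root_.sinc (2 * π * ((n : ℝ) / (2 * Xc) - κ) * Xc) : ℂ))
      atTop (nhds (ftBounded Xc c κ)) := by
  intro κ
  have hX : -Xc ≤ Xc := by linarith
  have hc : IntervalIntegrable (fun x => (c x : ℂ)) volume (-Xc) Xc :=
    (intervalIntegrable_iff_integrableOn_Icc_of_le hX).2 hInt.ofReal
  let S : ℕ → ℝ → ℂ := fun N x => 1 / (2 * Xc) *
    ∑ n ∈ Finset.Icc (-(N : ℤ)) (N : ℤ), ftBounded Xc c ((n : ℝ) / (2 * Xc)) *
      Complex.exp (-Complex.I * 2 * π * ((n : ℝ) / (2 * Xc)) * x)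
  have hS : ∀ N, IntervalIntegrable (S N) volume (-Xc) Xc :=
    fun N => Continuous.intervalIntegrable (by fun_prop) _ _
  have hsum : ∀ N : ℕ, fourierOn Xc (S N) κ = ∑ n ∈ Finset.Icc (-(N : ℤ)) (N : ℤ),
      ftBounded Xc c ((n : ℝ) / (2 * Xc)) *
        (_root_.sinc (2 * π * ((n : ℝ) / (2 * Xc) - κ) * Xc) : ℂ) := fun N => by
    simpa only [Complex.ofReal_div, Complex.ofReal_mul, Complex.ofReal_ofNat, ← sinc_eq_real_sinc]
      using fourierOn_trigSum (Finset.Icc (-(N : ℤ)) N) hXc.ne'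
        (fun n => ftBounded Xc c (n / (2 * Xc))) (fun n => n / (2 * Xc)) κ
  rw [ftBounded_eq_fourierOn Xc c κ]
  simpa only [hsum] using tendsto_fourierOn_of_tendsto_integral_norm_sub hX hc hS hL1 κ
end

section
/- Let f be a probability density on ℝ that is nonincreasing on [X_c, ∞). Then for each integer n ≥ 1, the tail integral I₂(κ_{2n−1}) = ∫_{X_c}^∞ f(s) e^{i2πκ_{2n−1}s} ds satisfies |I₂(κ_{2n−1})| ≤ (X_c/(2n−1)) · f(X_c), where κ_m = m/(2X_c) and X_c > 0. -/
/-!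
With `T = X_c/(2n-1)` the oscillating factor `g` is antiperiodic: `g (s + T) = -g s`. Hence
`∫_{X_c}^∞ (f s + f (s + T)) g s = ∫_{X_c}^{X_c+T} f g` by telescoping `f g`, while
`f s - f (s + T) ≥ 0` telescopes to `∫_{X_c}^∞ (f s - f (s + T)) = ∫_{X_c}^{X_c+T} f`.
Both integrals are thus at most `∫_{X_c}^{X_c+T} f ≤ T f(X_c)` in norm, and they add up to twice
the tail integral.
-/

open Real MeasureTheory Set Function

theorem MeasureTheory.IntegrableOn.comp_add_right_Ioi {F : Type*} [NormedAddCommGroup F]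
    {φ : ℝ → F} {a T : ℝ} (hT : 0 ≤ T) (hφ : IntegrableOn φ (Ioi a)) :
    IntegrableOn (fun s => φ (s + T)) (Ioi a) := by
  have h := (measurePreserving_add_right volume T).integrableOn_comp_preimage
    (measurableEmbedding_addRight T) (f := φ) (s := Ioi (a + T))
  rw [preimage_add_const_Ioi, add_sub_cancel_right] at h
  exact h.2 (hφ.mono_set (Ioi_subset_Ioi (by linarith)))

section

variable {E : Type*} [NormedAddCommGroup E] [NormedSpace ℝ E]

theorem setIntegral_Ioi_comp_add_right (φ : ℝ → E) (a T : ℝ) :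
    ∫ s in Ioi a, φ (s + T) = ∫ s in Ioi (a + T), φ s := by
  simpa [preimage_add_const_Ioi] using
    (measurePreserving_add_right volume T).setIntegral_preimage_emb
      (measurableEmbedding_addRight T) φ (Ioi (a + T))

theorem setIntegral_Ioi_sub_comp_add_right {φ : ℝ → E} {a T : ℝ} (hT : 0 ≤ T)
    (hφ : IntegrableOn φ (Ioi a)) :
    ∫ s in Ioi a, (φ s - φ (s + T)) = ∫ s in Ioc a (a + T), φ s := by
  rw [integral_sub hφ (hφ.comp_add_right_Ioi hT), setIntegral_Ioi_comp_add_right,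
    ← Ioc_union_Ioi_eq_Ioi (le_add_of_nonneg_right hT),
    setIntegral_union (Ioc_disjoint_Ioi le_rfl) measurableSet_Ioi
      (hφ.mono_set Ioc_subset_Ioi_self) (hφ.mono_set (Ioi_subset_Ioi (by linarith)))]
  abel

theorem norm_setIntegral_smul_le {α : Type*} [MeasurableSpace α] {μ : Measure α}
    {w : α → ℝ} {g : α → E} {S : Set α} (hS : MeasurableSet S) (hw : IntegrableOn w S μ)
    (hw0 : ∀ s ∈ S, 0 ≤ w s) (hg : ∀ s, ‖g s‖ ≤ 1) :
    ‖∫ s in S, w s • g s ∂μ‖ ≤ ∫ s in S, w s ∂μ := by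
  refine norm_integral_le_of_norm_le hw (ae_restrict_of_forall_mem hS fun s hs => ?_)
  rw [norm_smul, Real.norm_of_nonneg (hw0 s hs)]
  exact mul_le_of_le_one_right (hw0 s hs) (hg s)

end

theorem AntitoneOn.setIntegral_Ioc_le {f : ℝ → ℝ} {a T : ℝ} (hf : AntitoneOn f (Ici a))
    (hT : 0 ≤ T) : ∫ s in Ioc a (a + T), f s ≤ T * f a := by
  have hint : IntegrableOn f (Icc a (a + T)) :=
    (hf.mono Icc_subset_Ici_self).integrableOn_isCompact isCompact_Icc
  calc ∫ s in Ioc a (a + T), f s ≤ ∫ _ in Ioc a (a + T), f a :=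
        setIntegral_mono_on (hint.mono_set Ioc_subset_Icc_self) (integrableOn_const (by simp))
          measurableSet_Ioc fun s hs => hf self_mem_Ici hs.1.le hs.1.le
    _ = T * f a := by simp [hT]

theorem AntitoneOn.norm_setIntegral_Ioi_smul_antiperiodic_le {E : Type*} [NormedAddCommGroup E]
    [NormedSpace ℝ E] {f : ℝ → ℝ} {g : ℝ → E} {a T : ℝ} (hf : AntitoneOn f (Ici a))
    (hf0 : ∀ s ∈ Ioi a, 0 ≤ f s) (hfi : IntegrableOn f (Ioi a)) (hT : 0 < T)
    (hg : Antiperiodic g T) (hgm : AEStronglyMeasurable g) (hg1 : ∀ s, ‖g s‖ ≤ 1) :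
    ‖∫ s in Ioi a, f s • g s‖ ≤ T * f a := by
  have smul_g : ∀ w : ℝ → ℝ, IntegrableOn w (Ioi a) →
      IntegrableOn (fun s => w s • g s) (Ioi a) := fun w hw =>
    hw.smul_bdd 1 hgm.restrict (ae_of_all _ hg1)
  have hfT := hfi.comp_add_right_Ioi hT.le
  have hdecr : ∀ s ∈ Ioi a, 0 ≤ f s - f (s + T) := fun s hs =>
    sub_nonneg.2 (hf (mem_Ici.2 hs.out.le) (mem_Ici.2 (by linarith [mem_Ioi.1 hs]))
      (by linarith))
  have hplus : ∫ s in Ioi a, (f s + f (s + T)) • g s = ∫ s in Ioc a (a + T), f s • g s := by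
    rw [← setIntegral_Ioi_sub_comp_add_right hT.le (smul_g f hfi)]
    simp only [hg _, smul_neg, sub_neg_eq_add, add_smul]
  have htwice : (2 : ℝ) • ∫ s in Ioi a, f s • g s =
      (∫ s in Ioi a, (f s + f (s + T)) • g s) + ∫ s in Ioi a, (f s - f (s + T)) • g s := by
    rw [← integral_add (smul_g (fun s => f s + f (s + T)) (hfi.add hfT))
      (smul_g (fun s => f s - f (s + T)) (hfi.sub hfT)), ← integral_smul]
    congr 1 with s
    module
  have hplus_le : ‖∫ s in Ioc a (a + T), f s • g s‖ ≤ T * f a :=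
    (norm_setIntegral_smul_le measurableSet_Ioc (hfi.mono_set Ioc_subset_Ioi_self)
      (fun s hs => hf0 s hs.1) hg1).trans (hf.setIntegral_Ioc_le hT.le)
  have hminus_le : ‖∫ s in Ioi a, (f s - f (s + T)) • g s‖ ≤ T * f a := by
    refine (norm_setIntegral_smul_le (w := fun s => f s - f (s + T))
      measurableSet_Ioi (hfi.sub hfT) hdecr hg1).trans ?_
    rw [setIntegral_Ioi_sub_comp_add_right hT.le hfi]
    exact hf.setIntegral_Ioc_le hT.le
  have htriangle := norm_add_le (∫ s in Ioi a, (f s + f (s + T)) • g s)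
    (∫ s in Ioi a, (f s - f (s + T)) • g s)
  rw [← htwice, hplus, norm_smul, Real.norm_two] at htriangle
  linarith

theorem Complex.antiperiodic_exp_ofReal_mul_I {T : ℝ} (hT : T ≠ 0) :
    Antiperiodic (fun s : ℝ => exp (↑(π / T) * I * s)) T := fun s => by
  have hT' : (T : ℂ) ≠ 0 := ofReal_ne_zero.2 hT
  rw [← exp_antiperiodic]
  push_cast
  field_simp

theorem tail_integral_bound_general (f : ℝ → ℝ) (hf0 : ∀ s, 0 ≤ f s) (hfInt : Integrable f)
    (Xc : ℝ) (hXc : 0 < Xc)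
    (hmono : AntitoneOn f (Set.Ici Xc)) (n : ℕ) (hn : 1 ≤ n) :
    ‖(∫ s in Set.Ioi Xc,
        (f s : ℂ) * Complex.exp (Complex.I * 2 * π * ((2 * (n : ℝ) - 1) / (2 * Xc)) * s))‖
      ≤ (Xc / (2 * (n : ℝ) - 1)) * f Xc := by
  have hodd : (0 : ℝ) < 2 * n - 1 := by
    have : (1 : ℝ) ≤ n := by exact_mod_cast hn
    linarith
  set T : ℝ := Xc / (2 * n - 1)
  have hfreq : Complex.I * 2 * π * ((2 * (n : ℝ) - 1) / (2 * Xc)) = ↑(π / T) * Complex.I := by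
    have hXc' : (Xc : ℂ) ≠ 0 := Complex.ofReal_ne_zero.2 hXc.ne'
    have hodd' : (2 * n - 1 : ℂ) ≠ 0 := by exact_mod_cast hodd.ne'
    simp only [T]
    push_cast
    field_simp
  have hg1 (s : ℝ) : ‖Complex.exp (↑(π / T) * Complex.I * s)‖ ≤ 1 := by
    rw [mul_right_comm, ← Complex.ofReal_mul, Complex.norm_exp_ofReal_mul_I]
  have hT : 0 < T := div_pos hXc hodd
  simpa only [hfreq, Complex.real_smul] using
    hmono.norm_setIntegral_Ioi_smul_antiperiodic_le (fun s _ => hf0 s) hfInt.integrableOn hT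
      (Complex.antiperiodic_exp_ofReal_mul_I hT.ne') (by fun_prop) hg1

theorem tail_integral_bound (f : ℝ → ℝ) (hf0 : ∀ s, 0 ≤ f s) (hfInt : Integrable f)
    (hf1 : ∫ s, f s = 1) (Xc : ℝ) (hXc : 0 < Xc)
    (hmono : AntitoneOn f (Set.Ici Xc)) (n : ℕ) (hn : 1 ≤ n) :
    ‖(∫ s in Set.Ioi Xc,
        (f s : ℂ) * Complex.exp (Complex.I * 2 * π * ((2 * (n : ℝ) - 1) / (2 * Xc)) * s))‖
      ≤ (Xc / (2 * (n : ℝ) - 1)) * f Xc :=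
  tail_integral_bound_general f hf0 hfInt Xc hXc hmono n hn
end
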